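/- Let ℓ be a prime, m ∈ ℕ ∪ {∞}, K a field, and Σ ⊂ 𝔤^m(K) a valuative subset. Then there exists a unique coarsest valuation v_Σ of K such that Σ ⊂ I_{v_Σ}^m; that is, Σ ⊂ I_{v_Σ}^m, and for every valuation w of K with Σ ⊂ I_w^m one has O_w ⊆ O_{v_Σ}. More precisely, for any valuation w with Σ ⊂ I_w^m, v_Σ is the coarsening of w associated to the maximal convex subgroup of wK contained in w(Σ^⊥), and its unit group is U_{v_Σ} = {t ∈ Σ^⊥ : for all x ∈ K^× ∖ Σ^⊥, t − x ∈ (1−x)·Σ^⊥}. -/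

import Mathlib

open Polynomial

noncomputable section

/-- The coefficient ring `Λ_m`: `ℤ/ℓ^m` for finite `m`, and `ℤ_ℓ` for `m = ∞`. -/
def Lam (ℓ : ℕ) [Fact ℓ.Prime] : ℕ∞ → Type
  | ⊤ => PadicInt ℓ
  | (m : ℕ) => ZMod (ℓ ^ m)

instance (ℓ : ℕ) [Fact ℓ.Prime] : (m : ℕ∞) → CommRing (Lam ℓ m)
  | ⊤ => inferInstanceAs (CommRing (PadicInt ℓ))
  | (m : ℕ) => inferInstanceAs (CommRing (ZMod (ℓ ^ m)))

/-- The canonical projection `Λ_m → Λ_n` (for `n ≤ m`; junk value `0` otherwise). -/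
def LamProj (ℓ : ℕ) [Fact ℓ.Prime] : (m n : ℕ∞) → Lam ℓ m →+ Lam ℓ n
  | ⊤, ⊤ => AddMonoidHom.id _
  | ⊤, (n : ℕ) => (PadicInt.toZModPow n).toAddMonoidHom
  | (m : ℕ), (n : ℕ) =>
      if h : ℓ ^ n ∣ ℓ ^ m then (ZMod.castHom h (ZMod (ℓ ^ n))).toAddMonoidHom else 0
  | (_ : ℕ), ⊤ => 0

/-- The `ℓ^m`-minimized Galois group `𝔤^m(K) = Hom(Kˣ, Λ_m)`. -/
abbrev gal (ℓ : ℕ) [Fact ℓ.Prime] (m : ℕ∞) (K : Type*) [Field K] : Type _ :=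
  Additive Kˣ →+ Lam ℓ m

variable {ℓ : ℕ} [Fact ℓ.Prime] {K : Type*} [Field K]

open scoped Classical

/-- Evaluation of `σ ∈ 𝔤^m(K)` at a unit of `K`. -/
def galu {m : ℕ∞} (σ : gal ℓ m K) (x : Kˣ) : Lam ℓ m :=
  σ (Additive.ofMul x)

/-- Evaluation of `σ ∈ 𝔤^m(K)` at an arbitrary element of `K` (junk value `0` at `0`). -/
def galApp {m : ℕ∞} (σ : gal ℓ m K) (x : K) : Lam ℓ m :=
  if hx : x ≠ 0 then galu σ (Units.mk0 x hx) else 0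

/-- Scalar multiplication of `𝔤^m(K)` by `Λ_m`. -/
def galSmul {m : ℕ∞} (a : Lam ℓ m) (σ : gal ℓ m K) : gal ℓ m K :=
  AddMonoidHom.mk' (fun x => a * σ x) (by intro x y; simp only [map_add, mul_add])

/-- The canonical map `𝔤^m(K) → 𝔤^n(K)`, `σ ↦ σ_n`. -/
def galProj (m n : ℕ∞) (σ : gal ℓ m K) : gal ℓ n K :=
  (LamProj ℓ m n).comp σ

/-- `(σ,τ)` is a C-pair: `σ(x)·τ(1−x) = σ(1−x)·τ(x)` for all `x ∈ K ∖ {0,1}`. -/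
def IsCPair {m : ℕ∞} (σ τ : gal ℓ m K) : Prop :=
  ∀ x : K, x ≠ 0 → x ≠ 1 →
    galApp σ x * galApp τ (1 - x) = galApp σ (1 - x) * galApp τ x

/-- A subset of `𝔤^m(K)` is a C-set if all pairs of its elements are C-pairs. -/
def IsCSet {m : ℕ∞} (S : Set (gal ℓ m K)) : Prop :=
  ∀ σ ∈ S, ∀ τ ∈ S, IsCPair σ τ

/-- `μ_{c·ℓ^m} ⊂ K`: the polynomial `X^{c·ℓ^m} − 1` splits completely in `K`
(for all finite exponents when `m = ∞`). -/
def MuIn (K : Type*) [Field K] (c ℓ : ℕ) : ℕ∞ → Prop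
  | ⊤ => ∀ k : ℕ, Polynomial.Splits (Polynomial.X ^ (c * ℓ ^ k) - 1 : Polynomial K)
  | (N : ℕ) => Polynomial.Splits (Polynomial.X ^ (c * ℓ ^ N) - 1 : Polynomial K)

/-- `M_r(n) = (r+1)·n − r`. -/
def Mfun (r : ℕ) : ℕ∞ → ℕ∞
  | ⊤ => ⊤
  | (n : ℕ) => (((r + 1) * n - r : ℕ) : ℕ∞)

/-- `N(n) = M_1((6·ℓ^{3n−2} − 7)·(n−1) + 3n − 2)`. -/
def Nfun (ℓ : ℕ) : ℕ∞ → ℕ∞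
  | ⊤ => ⊤
  | (n : ℕ) => Mfun 1 (((6 * ℓ ^ (3 * n - 2) - 7) * (n - 1) + 3 * n - 2 : ℕ) : ℕ∞)

/-- `R(n) = N(M_2(M_1(n)))`. -/
def Rfun (ℓ : ℕ) (n : ℕ∞) : ℕ∞ :=
  Nfun ℓ (Mfun 2 (Mfun 1 n))

/-- The minimized inertia group `I_v^m` of a valuation (valuation subring) of `K`:
homomorphisms vanishing on the `v`-units. -/
def inertia (ℓ : ℕ) [Fact ℓ.Prime] (m : ℕ∞) (A : ValuationSubring K) : Set (gal ℓ m K) :=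
  {σ | ∀ x : Kˣ, A.valuation (x : K) = 1 → galu σ x = 0}

/-- The minimized decomposition group `D_v^m` of a valuation (valuation subring) of `K`:
homomorphisms vanishing on the principal `v`-units `1 + 𝔪_v`. -/
def decomp (ℓ : ℕ) [Fact ℓ.Prime] (m : ℕ∞) (A : ValuationSubring K) : Set (gal ℓ m K) :=
  {σ | ∀ x : Kˣ, A.valuation ((x : K) - 1) < 1 → galu σ x = 0}

/-- A subgroup of (the units of) a linearly ordered group-with-zero is convex. -/
def IsConvexSub {Γ : Type*} [LinearOrderedCommGroupWithZero Γ] (C : Subgroup Γˣ) : Prop :=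
  ∀ γ c : Γˣ, (1 : Γ) ≤ (γ : Γ) → (γ : Γ) ≤ (c : Γ) → c ∈ C → γ ∈ C

/-- A subgroup is `ℓ`-divisible. -/
def IsLDivisible {Γ : Type*} [LinearOrderedCommGroupWithZero Γ] (ℓ : ℕ) (C : Subgroup Γˣ) :
    Prop :=
  ∀ c ∈ C, ∃ d ∈ C, d ^ ℓ = c

/-- Condition (V1): the value group `vK` contains no nontrivial `ℓ`-divisible convex
subgroups. -/
def NoLDivConvex (ℓ : ℕ) (A : ValuationSubring K) : Prop :=
  ∀ C : Subgroup (A.ValueGroup)ˣ, IsConvexSub C → IsLDivisible ℓ C → C = ⊥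

/-- The residue field `Kv` of a valuation. -/
abbrev resField (A : ValuationSubring K) : Type _ := IsLocalRing.ResidueField A

/-- `τ ∈ 𝔤^m(Kv)` is the element induced by `σ ∈ D_v^m` (i.e. `τ = σ_v`): for every
`v`-unit `x` one has `τ(x̄) = σ(x)`. -/
def Induces {m : ℕ∞} (A : ValuationSubring K) (σ : gal ℓ m K)
    (τ : gal ℓ m (resField A)) : Prop :=
  ∀ (x : Kˣ) (h : A.valuation (x : K) = 1),
    galApp τ (IsLocalRing.residue A ⟨(x : K), (A.valuation_le_one_iff (x : K)).mp h.le⟩) =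
      galu σ x

/-- An `m`-visible valuation. -/
def IsVisibleVal (ℓ : ℕ) [Fact ℓ.Prime] (m : ℕ∞) (A : ValuationSubring K) : Prop :=
  NoLDivConvex ℓ A ∧
  ¬ IsCSet (Set.univ : Set (gal ℓ m (resField A))) ∧
  ∀ B : ValuationSubring (resField A),
    decomp ℓ m B = Set.univ → inertia ℓ m B = {0}

/-- `Σ^⊥ = ∩_{σ ∈ Σ} ker σ ⊆ Kˣ`. -/
def orth {m : ℕ∞} (S : Set (gal ℓ m K)) : Set Kˣ :=
  {x | ∀ σ ∈ S, galu σ x = 0}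

/-- `σ` is valuative: `σ ∈ I_v^m` for some valuation `v` of `K`. -/
def IsValuative {m : ℕ∞} (σ : gal ℓ m K) : Prop :=
  ∃ A : ValuationSubring K, σ ∈ inertia ℓ m A

/-- `V = v_σ` is the coarsest valuation with `σ ∈ I_V^m`. -/
def IsVsigma {m : ℕ∞} (σ : gal ℓ m K) (V : ValuationSubring K) : Prop :=
  σ ∈ inertia ℓ m V ∧ ∀ W : ValuationSubring K, σ ∈ inertia ℓ m W → W ≤ V

/-- `V = v_Σ` is the coarsest valuation with `Σ ⊆ I_V^m`. -/
def IsVSet {m : ℕ∞} (S : Set (gal ℓ m K)) (V : ValuationSubring K) : Prop :=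
  S ⊆ inertia ℓ m V ∧ ∀ W : ValuationSubring K, S ⊆ inertia ℓ m W → W ≤ V

/-- The set `D^m_n(Σ)`. -/
def Dmn (n m : ℕ∞) (S : Set (gal ℓ n K)) : Set (gal ℓ n K) :=
  {τ | ∀ σ ∈ S, ∃ τ₁ τ₂ : gal ℓ n K, ∃ σ' τ' τ₁' τ₂' : gal ℓ m K,
    galProj m n σ' = σ ∧ galProj m n τ' = τ ∧ galProj m n τ₁' = τ₁ ∧ galProj m n τ₂' = τ₂ ∧
    ¬ IsCPair τ₁ τ₂ ∧ IsCPair σ' τ' ∧ IsCPair σ' τ₁' ∧ IsCPair σ' τ₂'}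

/-- The set `I^m_n(Σ)`. -/
def Imn (n m : ℕ∞) (S : Set (gal ℓ n K)) : Set (gal ℓ n K) :=
  {σ | σ ∈ S ∧ ∃ σ' : gal ℓ m K, galProj m n σ' = σ ∧
    ∀ τ ∈ S, ∃ τ' : gal ℓ m K, galProj m n τ' = τ ∧ IsCPair σ' τ'}

/-- `K` is a function field over `k`, i.e. a finitely generated field extension. -/
def IsFunctionField (k K : Type*) [Field k] [Field K] [Algebra k K] : Prop :=
  ∃ s : Finset K, IntermediateField.adjoin k (s : Set K) = ⊤

/-- `trdeg(K|k) = d`. -/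
def HasTrdeg (k K : Type*) [Field k] [Field K] [Algebra k K] (d : ℕ) : Prop :=
  ∃ b : Fin d → K, IsTranscendenceBasis k b


/-- The set `ℓ^n·𝔤^m(K)` (interpreted as the trivial subgroup when `n = ∞`). -/
def lPowSet (ℓ : ℕ) [Fact ℓ.Prime] (m : ℕ∞) (K : Type*) [Field K] : ℕ∞ → Set (gal ℓ m K)
  | ⊤ => {0}
  | (k : ℕ) => {x | ∃ σ : gal ℓ m K, x = galSmul ((ℓ : Lam ℓ m) ^ k) σ}

end

/-!
Write `O = Σ^⊥` and `T` for the set on the right of the description of the units. If a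
valuation ring `A` has all its units in `O`, then they lie in `T`: for a unit `t` and a
non-unit `x`, the elements `t - x` and `1 - x` have the same value, so `(t - x)/(1 - x)` is a
unit. Conversely, fix such a `w` and `t ∈ T`. For `x ∉ O` with `w x` strictly between `1` and
`w t`, the ultrametric inequality applied to `t - x = (1 - x) u` shows `w x ∈ w(O)`; so the
whole interval between `1` and `w t` lies in `w(O)`, i.e. `w t` lies in the maximal convex
subgroup `Δ ⊆ w(O)`. Hence the coarsening `w_Δ` has unit group `T`, and its units
`w⁻¹(Δ) ⊆ w⁻¹(w(O)) = O`. Since a valuation ring is determined by its unit group, `w_Δ` is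
the coarsest valuation with units in `O`, independently of `w`.
-/

section ConvexSubgroup

variable {Γ : Type*} [LinearOrderedCommGroupWithZero Γ]

theorem isConvexSub_iff {C : Subgroup Γˣ} :
    IsConvexSub C ↔ ∀ γ c : Γˣ, 1 ≤ γ → γ ≤ c → c ∈ C → γ ∈ C :=
  Iff.rfl

theorem IsConvexSub.mem_of_le_of_inv_le {C : Subgroup Γˣ} (hC : IsConvexSub C) {γ c d : Γˣ}
    (hc : c ∈ C) (hd : d ∈ C) (hγc : γ ≤ c) (hγd : γ⁻¹ ≤ d) : γ ∈ C := by
  rcases le_total 1 γ with hγ | hγ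
  · exact isConvexSub_iff.mp hC γ c hγ hγc hc
  · exact inv_mem_iff.mp (isConvexSub_iff.mp hC γ⁻¹ d (one_le_inv'.mpr hγ) hγd hd)

/-- The largest convex subgroup contained in `H`. -/
def maxConvexSub (H : Subgroup Γˣ) : Subgroup Γˣ where
  carrier := {γ | ∀ δ : Γˣ, 1 ≤ δ → δ ≤ |γ|ₘ → δ ∈ H}
  one_mem' δ h1 h2 := by
    rw [le_antisymm (mabs_one (α := Γˣ) ▸ h2) h1]
    exact H.one_mem
  mul_mem' {γ γ'} hγ hγ' δ h1 h2 := by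
    rcases le_total δ |γ|ₘ with h | h
    · exact hγ δ h1 h
    · have h' : δ * |γ|ₘ⁻¹ ≤ |γ'|ₘ := by
        rw [mul_inv_le_iff_le_mul']
        exact h2.trans (mabs_mul_le γ γ')
      rw [← mul_inv_cancel_right δ |γ|ₘ, mul_right_comm]
      exact H.mul_mem (hγ' _ (le_mul_inv_iff_mul_le.mpr (by simpa using h)) h')
        (hγ _ (one_le_mabs γ) le_rfl)
  inv_mem' {γ} hγ δ h1 h2 := hγ δ h1 (mabs_inv γ ▸ h2)

theorem isConvexSub_maxConvexSub (H : Subgroup Γˣ) : IsConvexSub (maxConvexSub H) :=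
  isConvexSub_iff.mpr fun _ c h1 h2 hc δ hδ1 hδ2 =>
    hc δ hδ1 (hδ2.trans ((mabs_of_one_le h1).trans_le (h2.trans (le_mabs_self c))))

theorem maxConvexSub_le (H : Subgroup Γˣ) : maxConvexSub H ≤ H := by
  intro γ hγ
  rcases mabs_choice γ with h | h
  · exact h ▸ hγ _ (one_le_mabs γ) le_rfl
  · exact inv_mem_iff.mp (h ▸ hγ _ (one_le_mabs γ) le_rfl)

theorem le_maxConvexSub {C H : Subgroup Γˣ} (hC : IsConvexSub C) (hCH : C ≤ H) :
    C ≤ maxConvexSub H := by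
  intro γ hγ δ h1 h2
  have hmabs : |γ|ₘ ∈ C := by
    rcases mabs_choice γ with h | h <;> rw [h]
    exacts [hγ, C.inv_mem hγ]
  exact hCH (isConvexSub_iff.mp hC δ _ h1 h2 hmabs)

end ConvexSubgroup

namespace ValuationSubring

variable {K : Type*} [Field K]

noncomputable def valueUnits (W : ValuationSubring K) : Kˣ →* W.ValueGroupˣ :=
  Units.map W.valuation.toMonoidWithZeroHom.toMonoidHom

@[simp]
theorem val_valueUnits (W : ValuationSubring K) (x : Kˣ) :
    (W.valueUnits x : W.ValueGroup) = W.valuation (x : K) :=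
  rfl

theorem valueUnits_surjective (W : ValuationSubring K) : Function.Surjective W.valueUnits := by
  intro δ
  obtain ⟨x, hx⟩ := W.valuation_surjective δ
  have hx0 : x ≠ 0 := by
    rintro rfl
    exact δ.ne_zero (by rw [← hx, map_zero])
  exact ⟨Units.mk0 x hx0, Units.ext hx⟩

theorem ker_valueUnits (W : ValuationSubring K) : W.valueUnits.ker = W.unitGroup := by
  ext x
  rw [MonoidHom.mem_ker, mem_unitGroup_iff, Units.ext_iff, val_valueUnits, Units.val_one]

theorem mem_unitGroup_iff_mem_and_inv_mem (A : ValuationSubring K) (x : Kˣ) :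
    x ∈ A.unitGroup ↔ (x : K) ∈ A ∧ (x : K)⁻¹ ∈ A := by
  have hx : 0 < A.valuation (x : K) := zero_lt_iff.mpr (by simp)
  rw [mem_unitGroup_iff, ← valuation_le_one_iff, ← valuation_le_one_iff, map_inv₀,
    inv_le_one₀ hx, le_antisymm_iff]

/-- For convex `Δ`, the valuation ring of `w` composed with `wK → wK/Δ`. -/
def coarsening (W : ValuationSubring K) (Δ : Subgroup W.ValueGroupˣ) : ValuationSubring K where
  carrier := {y | ∃ δ ∈ Δ, W.valuation y ≤ δ}
  zero_mem' := ⟨1, Δ.one_mem, by simp⟩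
  one_mem' := ⟨1, Δ.one_mem, by simp⟩
  add_mem' := by
    rintro a b ⟨δ₁, hδ₁, h₁⟩ ⟨δ₂, hδ₂, h₂⟩
    rcases le_total δ₁ δ₂ with h | h
    · exact ⟨δ₂, hδ₂, (W.valuation.map_add a b).trans (max_le (h₁.trans h) h₂)⟩
    · exact ⟨δ₁, hδ₁, (W.valuation.map_add a b).trans (max_le h₁ (h₂.trans h))⟩
  mul_mem' := by
    rintro a b ⟨δ₁, hδ₁, h₁⟩ ⟨δ₂, hδ₂, h₂⟩
    exact ⟨δ₁ * δ₂, Δ.mul_mem hδ₁ hδ₂, by rw [map_mul, Units.val_mul]; exact mul_le_mul' h₁ h₂⟩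
  neg_mem' := by
    rintro a ⟨δ, hδ, h⟩
    exact ⟨δ, hδ, by rwa [Valuation.map_neg]⟩
  mem_or_inv_mem' x := by
    rcases W.mem_or_inv_mem x with h | h
    · exact Or.inl ⟨1, Δ.one_mem, by simpa using (W.valuation_le_one_iff _).mpr h⟩
    · exact Or.inr ⟨1, Δ.one_mem, by simpa using (W.valuation_le_one_iff _).mpr h⟩

theorem mem_coarsening {W : ValuationSubring K} {Δ : Subgroup W.ValueGroupˣ} {y : K} :
    y ∈ W.coarsening Δ ↔ ∃ δ ∈ Δ, W.valuation y ≤ δ :=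
  Iff.rfl

theorem mem_unitGroup_coarsening_iff {W : ValuationSubring K} {Δ : Subgroup W.ValueGroupˣ}
    (hΔ : IsConvexSub Δ) (x : Kˣ) :
    x ∈ (W.coarsening Δ).unitGroup ↔ W.valueUnits x ∈ Δ := by
  rw [mem_unitGroup_iff_mem_and_inv_mem, mem_coarsening, mem_coarsening, map_inv₀]
  constructor
  · rintro ⟨⟨δ, hδ, hle⟩, ⟨δ', hδ', hle'⟩⟩
    refine hΔ.mem_of_le_of_inv_le hδ hδ' ?_ ?_
    · rwa [← Units.val_le_val, val_valueUnits]
    · rwa [← Units.val_le_val, Units.val_inv_eq_inv_val, val_valueUnits]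
  · intro h
    exact ⟨⟨_, h, le_rfl⟩, ⟨_, Δ.inv_mem h, by simp⟩⟩

end ValuationSubring

theorem Valuation.map_sub_eq_map_one_sub {R Γ₀ : Type*} [Ring R]
    [LinearOrderedCommMonoidWithZero Γ₀] (v : Valuation R Γ₀) {a x : R} (ha : v a = 1)
    (hx : v x ≠ 1) : v (a - x) = v (1 - x) := by
  have key : ∀ b : R, v b = 1 → v (b - x) = max 1 (v x) := by
    intro b hb
    rw [sub_eq_add_neg, v.map_add_of_distinct_val (by rwa [map_neg, hb, ne_comm]), map_neg, hb]
  rw [key a ha, key 1 v.map_one]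

section CoarsestUnits

open ValuationSubring

variable {K : Type*} [Field K] {O : Subgroup Kˣ}

/-- The unit group of the coarsest valuation whose units all lie in `O`. -/
def coarsestUnits (O : Subgroup Kˣ) : Set Kˣ :=
  {t | t ∈ O ∧ ∀ x : Kˣ, x ∉ O → ∃ u ∈ O, (t : K) - x = (1 - x) * u}

theorem mem_coarsestUnits_of_mem_unitGroup {A : ValuationSubring K} (hA : A.unitGroup ≤ O)
    {t : Kˣ} (ht : t ∈ A.unitGroup) : t ∈ coarsestUnits O := by
  refine ⟨hA ht, fun x hx => ?_⟩
  have h1x : (1 : K) - x ≠ 0 := sub_ne_zero.mpr fun h =>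
    hx ((show x = 1 from Units.ext (by simpa using h.symm)) ▸ O.one_mem)
  have htx : (t : K) - x ≠ 0 := sub_ne_zero.mpr fun h => hx (Units.ext h ▸ hA ht)
  have hxA : A.valuation (x : K) ≠ 1 := fun h => hx (hA ((mem_unitGroup_iff A x).mpr h))
  have hu : Units.mk0 _ (div_ne_zero htx h1x) ∈ A.unitGroup := by
    rw [mem_unitGroup_iff, Units.val_mk0, map_div₀,
      A.valuation.map_sub_eq_map_one_sub ((mem_unitGroup_iff A t).mp ht) hxA,
      div_self (by simpa using h1x)]
  exact ⟨_, hA hu, by rw [Units.val_mk0, mul_div_cancel₀ _ h1x]⟩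

theorem valuation_sub_eq_of_mem_coarsestUnits (W : ValuationSubring K) {t x : Kˣ}
    (ht : t ∈ coarsestUnits O) (hx : x ∉ O) :
    ∃ u ∈ O, W.valuation ((t : K) - x) = W.valuation (1 - (x : K)) * W.valuation (u : K) := by
  obtain ⟨u, hu, h⟩ := ht.2 x hx
  exact ⟨u, hu, by rw [h, map_mul]⟩

theorem valueUnits_mem_map_of_one_lt_of_le {W : ValuationSubring K} {t x : Kˣ}
    (ht : t ∈ coarsestUnits O) (hx : x ∉ O) (h1 : 1 < W.valuation (x : K))
    (h2 : W.valuation (x : K) ≤ W.valuation (t : K)) : W.valueUnits x ∈ O.map W.valueUnits := by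
  rcases h2.lt_or_eq with h2 | h2
  · obtain ⟨u, hu, h⟩ := valuation_sub_eq_of_mem_coarsestUnits W ht hx
    rw [W.valuation.map_sub_eq_of_lt_left h2,
      W.valuation.map_sub_eq_of_lt_right (by simpa using h1)] at h
    refine ⟨t * u⁻¹, O.mul_mem ht.1 (O.inv_mem hu), ?_⟩
    rw [map_mul, map_inv, mul_inv_eq_iff_eq_mul]
    exact Units.ext (by simpa using h)
  · exact ⟨t, ht.1, Units.ext (by simpa using h2.symm)⟩

theorem valueUnits_mem_map_of_le_of_lt_one {W : ValuationSubring K} {t x : Kˣ}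
    (ht : t ∈ coarsestUnits O) (hx : x ∉ O) (h1 : W.valuation (t : K) ≤ W.valuation (x : K))
    (h2 : W.valuation (x : K) < 1) : W.valueUnits x ∈ O.map W.valueUnits := by
  rcases h1.lt_or_eq with h1 | h1
  · obtain ⟨u, hu, h⟩ := valuation_sub_eq_of_mem_coarsestUnits W ht hx
    rw [W.valuation.map_sub_eq_of_lt_right h1, W.valuation.map_one_sub_of_lt h2, one_mul] at h
    exact ⟨u, hu, Units.ext (by simpa using h.symm)⟩
  · exact ⟨t, ht.1, Units.ext (by simpa using h1)⟩

theorem valueUnits_mem_maxConvexSub {W : ValuationSubring K} (hW : W.unitGroup ≤ O) {t : Kˣ}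
    (ht : t ∈ coarsestUnits O) : W.valueUnits t ∈ maxConvexSub (O.map W.valueUnits) := by
  intro δ h1 h2
  obtain ⟨x, rfl⟩ := W.valueUnits_surjective δ
  by_cases hx : x ∈ O
  · exact Subgroup.mem_map_of_mem _ hx
  have hx1 : 1 < W.valueUnits x :=
    h1.lt_of_ne fun h => hx (hW (by rw [← ker_valueUnits]; exact h.symm))
  rcases le_total 1 (W.valueUnits t) with ht1 | ht1
  · rw [mabs_of_one_le ht1] at h2
    exact valueUnits_mem_map_of_one_lt_of_le ht hx (by simpa using Units.val_lt_val.mpr hx1)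
      (Units.val_le_val.mpr h2)
  · rw [mabs_of_le_one ht1, le_inv'] at h2
    rw [← inv_mem_iff, ← map_inv]
    refine valueUnits_mem_map_of_le_of_lt_one ht (fun h => hx (inv_mem_iff.mp h)) ?_ ?_
    · simpa using Units.val_le_val.mpr h2
    · simpa using Units.val_lt_val.mpr (inv_lt_one'.mpr hx1)

end CoarsestUnits

section Coarsest

open ValuationSubring

variable {K : Type*} [Field K] {O : Subgroup Kˣ} {W : ValuationSubring K}

theorem le_map_valueUnits_iff {Δ : Subgroup W.ValueGroupˣ} :
    Δ ≤ O.map W.valueUnits ↔ ∀ δ ∈ Δ, ∃ x ∈ O, W.valuation (x : K) = δ := by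
  refine forall₂_congr fun δ _ => exists_congr fun x => and_congr_right fun _ => ?_
  rw [Units.ext_iff, val_valueUnits]

theorem unitGroup_coarsening_le (hW : W.unitGroup ≤ O) {Δ : Subgroup W.ValueGroupˣ}
    (hΔ : IsConvexSub Δ) (hΔO : Δ ≤ O.map W.valueUnits) : (W.coarsening Δ).unitGroup ≤ O := by
  intro x hx
  rw [← Subgroup.comap_map_eq_self (H := O) (f := W.valueUnits) (by rwa [ker_valueUnits])]
  exact hΔO ((mem_unitGroup_coarsening_iff hΔ x).mp hx)

theorem coe_unitGroup_coarsening_maxConvexSub (hW : W.unitGroup ≤ O) :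
    ((W.coarsening (maxConvexSub (O.map W.valueUnits))).unitGroup : Set Kˣ) =
      coarsestUnits O := by
  have hconv := isConvexSub_maxConvexSub (O.map W.valueUnits)
  ext t
  exact ⟨mem_coarsestUnits_of_mem_unitGroup
      (unitGroup_coarsening_le hW hconv (maxConvexSub_le _)),
    fun ht => (mem_unitGroup_coarsening_iff hconv t).mpr (valueUnits_mem_maxConvexSub hW ht)⟩

theorem le_coarsening_maxConvexSub (hW : W.unitGroup ≤ O) {A : ValuationSubring K}
    (hA : A.unitGroup ≤ O) : A ≤ W.coarsening (maxConvexSub (O.map W.valueUnits)) := by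
  rw [← unitGroup_le_unitGroup, ← SetLike.coe_subset_coe,
    coe_unitGroup_coarsening_maxConvexSub hW]
  exact fun t => mem_coarsestUnits_of_mem_unitGroup hA

end Coarsest

section Orthogonal

open ValuationSubring

variable {ℓ : ℕ} [Fact ℓ.Prime] {m : ℕ∞} {K : Type*} [Field K] {S : Set (gal ℓ m K)}
  {W : ValuationSubring K}

theorem galu_one (σ : gal ℓ m K) : galu σ 1 = 0 :=
  map_zero σ

theorem galu_mul (σ : gal ℓ m K) (a b : Kˣ) : galu σ (a * b) = galu σ a + galu σ b :=
  map_add σ _ _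

theorem galu_inv (σ : gal ℓ m K) (a : Kˣ) : galu σ a⁻¹ = -galu σ a :=
  map_neg σ _

def orthSubgroup (S : Set (gal ℓ m K)) : Subgroup Kˣ where
  carrier := orth S
  one_mem' σ _ := galu_one σ
  mul_mem' ha hb σ hσ := by rw [galu_mul, ha σ hσ, hb σ hσ, add_zero]
  inv_mem' ha σ hσ := by rw [galu_inv, ha σ hσ, neg_zero]

theorem subset_inertia_iff {A : ValuationSubring K} :
    S ⊆ inertia ℓ m A ↔ A.unitGroup ≤ orthSubgroup S :=
  ⟨fun h _ hx _ hσ => h hσ _ hx, fun h _ hσ _ hx => h hx _ hσ⟩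

theorem isVSet_coarsening (hW : S ⊆ inertia ℓ m W) :
    IsVSet S (W.coarsening (maxConvexSub ((orthSubgroup S).map W.valueUnits))) := by
  rw [subset_inertia_iff] at hW
  exact ⟨subset_inertia_iff.mpr
      (unitGroup_coarsening_le hW (isConvexSub_maxConvexSub _) (maxConvexSub_le _)),
    fun A hA => le_coarsening_maxConvexSub hW (subset_inertia_iff.mp hA)⟩

theorem IsVSet.unique {V V' : ValuationSubring K} (hV : IsVSet S V) (hV' : IsVSet S V') :
    V = V' :=
  le_antisymm (hV'.2 V hV.1) (hV.2 V' hV'.1)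

theorem IsVSet.valuation_eq_one_iff {V : ValuationSubring K} (hV : IsVSet S V) (t : Kˣ) :
    V.valuation (t : K) = 1 ↔ t ∈ coarsestUnits (orthSubgroup S) := by
  rw [← mem_unitGroup_iff, hV.unique (isVSet_coarsening hV.1), ← SetLike.mem_coe,
    coe_unitGroup_coarsening_maxConvexSub (subset_inertia_iff.mp hV.1)]

end Orthogonal

theorem stmt12_general (ℓ : ℕ) [Fact ℓ.Prime] (m : ℕ∞) (K : Type*) [Field K]
    (S : Set (gal ℓ m K)) (hval : ∃ W : ValuationSubring K, S ⊆ inertia ℓ m W) :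
    (∃! V : ValuationSubring K, S ⊆ inertia ℓ m V ∧
      ∀ W : ValuationSubring K, S ⊆ inertia ℓ m W → W ≤ V) ∧
    (∀ V : ValuationSubring K,
      (S ⊆ inertia ℓ m V ∧ ∀ W : ValuationSubring K, S ⊆ inertia ℓ m W → W ≤ V) →
      (∀ t : Kˣ, V.valuation (t : K) = 1 ↔
        (t ∈ orth S ∧ ∀ x : Kˣ, x ∉ orth S →
          ∃ u ∈ orth S, (t : K) - (x : K) = (1 - (x : K)) * (u : K))) ∧
      (∀ W : ValuationSubring K, S ⊆ inertia ℓ m W →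
        ∀ Δ : Subgroup (W.ValueGroup)ˣ, IsConvexSub Δ →
          (∀ δ ∈ Δ, ∃ x ∈ orth S, W.valuation (x : K) = (δ : W.ValueGroup)) →
          (∀ Δ' : Subgroup (W.ValueGroup)ˣ, IsConvexSub Δ' →
            (∀ δ ∈ Δ', ∃ x ∈ orth S, W.valuation (x : K) = (δ : W.ValueGroup)) → Δ' ≤ Δ) →
          ∀ y : K, y ∈ V ↔ ∃ δ ∈ Δ, W.valuation y ≤ (δ : W.ValueGroup))) := by
  obtain ⟨W₀, hW₀⟩ := hval
  have hV₀ := isVSet_coarsening hW₀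
  refine ⟨⟨_, hV₀, fun V hV => IsVSet.unique hV hV₀⟩,
    fun V hV => ⟨IsVSet.valuation_eq_one_iff hV, fun W hW Δ hΔ hΔO hΔmax y => ?_⟩⟩
  obtain rfl : Δ = maxConvexSub ((orthSubgroup S).map W.valueUnits) :=
    le_antisymm (le_maxConvexSub hΔ (le_map_valueUnits_iff.mpr hΔO))
      (hΔmax _ (isConvexSub_maxConvexSub _) (le_map_valueUnits_iff.mp (maxConvexSub_le _)))
  rw [IsVSet.unique hV (isVSet_coarsening hW), ValuationSubring.mem_coarsening]

/-- Existence and description of the coarsest valuation `v_Σ` associated to a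
valuative subset `Σ`. -/
theorem stmt12 (ℓ : ℕ) [Fact ℓ.Prime] (m : ℕ∞) (hm : 1 ≤ m) (K : Type*) [Field K]
    (S : Set (gal ℓ m K)) (hval : ∃ W : ValuationSubring K, S ⊆ inertia ℓ m W) :
    (∃! V : ValuationSubring K, S ⊆ inertia ℓ m V ∧
      ∀ W : ValuationSubring K, S ⊆ inertia ℓ m W → W ≤ V) ∧
    (∀ V : ValuationSubring K,
      (S ⊆ inertia ℓ m V ∧ ∀ W : ValuationSubring K, S ⊆ inertia ℓ m W → W ≤ V) →
      (∀ t : Kˣ, V.valuation (t : K) = 1 ↔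
        (t ∈ orth S ∧ ∀ x : Kˣ, x ∉ orth S →
          ∃ u ∈ orth S, (t : K) - (x : K) = (1 - (x : K)) * (u : K))) ∧
      (∀ W : ValuationSubring K, S ⊆ inertia ℓ m W →
        ∀ Δ : Subgroup (W.ValueGroup)ˣ, IsConvexSub Δ →
          (∀ δ ∈ Δ, ∃ x ∈ orth S, W.valuation (x : K) = (δ : W.ValueGroup)) →
          (∀ Δ' : Subgroup (W.ValueGroup)ˣ, IsConvexSub Δ' →
            (∀ δ ∈ Δ', ∃ x ∈ orth S, W.valuation (x : K) = (δ : W.ValueGroup)) → Δ' ≤ Δ) →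
          ∀ y : K, y ∈ V ↔ ∃ δ ∈ Δ, W.valuation y ≤ (δ : W.ValueGroup))) :=
  stmt12_general ℓ m K S hval
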